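/- arXiv:2401.01424 — 8 statements merged into one kernel-verified Lean document; each statement's English description precedes it below -/
import Mathlib

section
/- Let N ≥ 1 and let g : Fin N → ℕ be the age-gains of the nodes, with M = max_i g(i). For a threshold Γ ∈ ℕ such that n(Γ) := |{i : g(i) ≥ Γ}| ≥ 1 and an integer frame length w ≥ 1, define the normalized average AoI reduction R̄(Γ, w) = (1/(N·w)) · (1 − 1/w)^{n(Γ)−1} · (Σ_{i : g(i) ≥ Γ} g(i)) − 1 as a real number, where the exponent n(Γ)−1 is a natural number and the convention 0^0 = 1 is used. Then for every such pair (Γ, w) we have R̄(Γ, w) ≤ R̄(M, n(M)); that is, setting the threshold equal to the maximal age-gain M and the frame length equal to the number n(M) of nodes attaining the maximal age-gain maximizes R̄. (Lemma 1) -/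
lemma bern_step (k : ℕ) (hk : 1 ≤ k) :
    (1 - 1/((k:ℝ)+1)) ^ k ≤ (1 - 1/(k:ℝ)) ^ (k - 1) := by
  have hk0 : (0:ℝ) < k := by exact_mod_cast hk
  have hk1 : (0:ℝ) < (k:ℝ)+1 := by linarith
  have hcast : ((k - 1 : ℕ):ℝ) = (k:ℝ) - 1 := by
    push_cast [Nat.cast_sub hk]; ring
  have ha : (-2:ℝ) ≤ -1/(k:ℝ)^2 := by
    rw [neg_div, neg_le_neg_iff, div_le_iff₀ (by positivity)]
    nlinarith
  have hb := one_add_mul_le_pow ha (k - 1)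
  rw [hcast] at hb
  have h1 : (k:ℝ)/((k:ℝ)+1) ≤ 1 + ((k:ℝ)-1) * (-1/(k:ℝ)^2) := by
    have he : 1 + ((k:ℝ)-1) * (-1/(k:ℝ)^2) = ((k:ℝ)^2 - k + 1)/(k:ℝ)^2 := by
      field_simp; ring
    rw [he, div_le_div_iff₀ hk1 (by positivity)]
    nlinarith
  have h2 : (k:ℝ)/((k:ℝ)+1) ≤ (1 - 1/(k:ℝ)^2) ^ (k-1) := by
    refine h1.trans ?_
    convert hb using 2
    ring
  have hq : (0:ℝ) ≤ ((k:ℝ)/((k:ℝ)+1)) ^ (k-1) := by positivity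
  have heq : (1 - 1/(k:ℝ)^2) * ((k:ℝ)/((k:ℝ)+1)) = 1 - 1/(k:ℝ) := by
    field_simp; ring
  calc (1 - 1/((k:ℝ)+1)) ^ k = ((k:ℝ)/((k:ℝ)+1)) ^ k := by
        congr 1; field_simp; ring
    _ = ((k:ℝ)/((k:ℝ)+1)) ^ (k-1) * ((k:ℝ)/((k:ℝ)+1)) := by
        rw [← pow_succ]; congr 1; omega
    _ ≤ ((k:ℝ)/((k:ℝ)+1)) ^ (k-1) * (1 - 1/(k:ℝ)^2) ^ (k-1) := by
        exact mul_le_mul_of_nonneg_left h2 hq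
    _ = (1 - 1/(k:ℝ)) ^ (k-1) := by
        rw [← mul_pow, mul_comm, heq]


lemma seq_mono (m nn : ℕ) (hm : 1 ≤ m) (hmn : m ≤ nn) :
    (1 - 1/(nn:ℝ)) ^ (nn - 1) ≤ (1 - 1/(m:ℝ)) ^ (m - 1) := by
  induction nn, hmn using Nat.le_induction with
  | base => exact le_refl _
  | succ k hk ih =>
    have hk1 : 1 ≤ k := hm.trans hk
    refine le_trans ?_ ih
    have := bern_step k hk1
    simpa [Nat.cast_add, Nat.cast_one, Nat.add_sub_cancel] using this

lemma frame_opt (nn w : ℕ) (hn : 1 ≤ nn) (hw : 1 ≤ w) :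
    (nn:ℝ)/w * (1 - 1/(w:ℝ)) ^ (nn - 1) ≤ (1 - 1/(nn:ℝ)) ^ (nn - 1) := by
  rcases eq_or_lt_of_le hn with h1 | h2
  · -- nn = 1
    subst_vars
    have hwp : (0:ℝ) < w := by exact_mod_cast hw
    simp only [Nat.cast_one, pow_zero, mul_one, Nat.sub_self]
    rw [div_le_one hwp]
    exact_mod_cast hw
  · rcases eq_or_lt_of_le hw with hw1 | hw2
    · -- w = 1
      subst_vars
      have hnp : (0:ℝ) < nn := by exact_mod_cast hn
      have h0 : nn - 1 ≠ 0 := by omega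
      have hr : (0:ℝ) ≤ 1 - 1/(nn:ℝ) := by
        rw [sub_nonneg, div_le_one hnp]; exact_mod_cast hn
      simp only [Nat.cast_one, div_one, sub_self, zero_pow h0, mul_zero]
      positivity
    · -- nn ≥ 2, w ≥ 2
      have hn2 : (2:ℝ) ≤ nn := by exact_mod_cast h2
      have hw2' : (2:ℝ) ≤ w := by exact_mod_cast hw2
      have hnp : (0:ℝ) < nn := by linarith
      have hwp : (0:ℝ) < w := by linarith
      have hw1p : (0:ℝ) < (w:ℝ) - 1 := by linarith
      set a : ℝ := ((nn:ℝ) - w)/((nn:ℝ)*((w:ℝ)-1)) with ha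
      have hcast : ((nn - 1 : ℕ):ℝ) = (nn:ℝ) - 1 := by
        push_cast [Nat.cast_sub hn]; ring
      have ha2 : (-2:ℝ) ≤ a := by
        rw [ha, le_div_iff₀ (by positivity)]
        nlinarith
      have hb := one_add_mul_le_pow ha2 (nn - 1)
      rw [hcast] at hb
      have h1 : (nn:ℝ)/w ≤ 1 + ((nn:ℝ)-1) * a := by
        rw [ha, div_le_iff₀ hwp]
        have he : (1 + ((nn:ℝ)-1) * (((nn:ℝ) - w)/((nn:ℝ)*((w:ℝ)-1)))) * w
            = ((nn:ℝ)*((w:ℝ)-1) + ((nn:ℝ)-1)*((nn:ℝ)-w)) * w / ((nn:ℝ)*((w:ℝ)-1)) := by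
          field_simp
        rw [he, le_div_iff₀ (by positivity)]
        nlinarith [sq_nonneg ((nn:ℝ) - w)]
      have hp : (0:ℝ) ≤ (1 - 1/(w:ℝ)) ^ (nn - 1) := by
        have : (0:ℝ) ≤ 1 - 1/(w:ℝ) := by
          rw [sub_nonneg, div_le_one hwp]; linarith
        positivity
      have heq : (1 + a) * (1 - 1/(w:ℝ)) = 1 - 1/(nn:ℝ) := by
        rw [ha]; field_simp; ring
      calc (nn:ℝ)/w * (1 - 1/(w:ℝ)) ^ (nn - 1)
          ≤ (1 + ((nn:ℝ)-1) * a) * (1 - 1/(w:ℝ)) ^ (nn - 1) :=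
            mul_le_mul_of_nonneg_right h1 hp
        _ ≤ (1 + a) ^ (nn - 1) * (1 - 1/(w:ℝ)) ^ (nn - 1) :=
            mul_le_mul_of_nonneg_right hb hp
        _ = ((1 + a) * (1 - 1/(w:ℝ))) ^ (nn - 1) := (mul_pow _ _ _).symm
        _ = (1 - 1/(nn:ℝ)) ^ (nn - 1) := by rw [heq]



/-- Lemma 1: in ideal T-DFSA, setting the threshold to the maximal age-gain `M` and the
frame length to the number of nodes attaining it maximizes the normalized AoI reduction. -/
theorem ideal_TDFSA_optimal_threshold_and_frame
    (N : ℕ) (hN : 1 ≤ N) (g : Fin N → ℕ)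
    (M : ℕ) (hM : M = Finset.univ.sup g)
    (n : ℕ → ℕ) (hn : ∀ Γ, n Γ = (Finset.univ.filter (fun i => Γ ≤ g i)).card)
    (R : ℕ → ℕ → ℝ)
    (hR : ∀ Γ w, R Γ w =
      (1 / ((N : ℝ) * w)) * (1 - 1 / (w : ℝ)) ^ (n Γ - 1) *
        (∑ i ∈ Finset.univ.filter (fun i => Γ ≤ g i), (g i : ℝ)) - 1)
    (Γ w : ℕ) (hΓ : 1 ≤ n Γ) (hw : 1 ≤ w) :
    R Γ w ≤ R M (n M) := by
  have hnn : Nonempty (Fin N) := ⟨⟨0, hN⟩⟩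
  obtain ⟨i0, -, hi0⟩ :=
    Finset.exists_mem_eq_sup (Finset.univ : Finset (Fin N)) Finset.univ_nonempty g
  have hgM : ∀ i, g i ≤ M := fun i => hM ▸ Finset.le_sup (Finset.mem_univ i)
  have hMi0 : g i0 = M := by rw [hM, hi0]
  have hm1 : 1 ≤ n M := by
    rw [hn]
    refine Finset.card_pos.mpr ⟨i0, ?_⟩
    simp [hMi0]
  obtain ⟨j, hj⟩ : ∃ j, Γ ≤ g j := by
    have h := hΓ
    rw [hn] at h
    obtain ⟨j, hj⟩ := Finset.card_pos.mp h
    exact ⟨j, (Finset.mem_filter.mp hj).2⟩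
  have hΓM : Γ ≤ M := hj.trans (hgM j)
  have hmn : n M ≤ n Γ := by
    rw [hn, hn]
    apply Finset.card_le_card
    intro i hi
    simp only [Finset.mem_filter, Finset.mem_univ, true_and] at hi ⊢
    exact hΓM.trans hi
  have sumT : (∑ i ∈ Finset.univ.filter (fun i => M ≤ g i), (g i : ℝ))
      = (n M : ℝ) * M := by
    rw [hn, Finset.sum_congr rfl
      (fun i hi => by
        have := (Finset.mem_filter.mp hi).2
        have : g i = M := le_antisymm (hgM i) this
        rw [this] : ∀ i ∈ Finset.univ.filter (fun i => M ≤ g i), (g i : ℝ) = (M:ℝ)),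
      Finset.sum_const, nsmul_eq_mul]
  have sumS : (∑ i ∈ Finset.univ.filter (fun i => Γ ≤ g i), (g i : ℝ))
      ≤ (n Γ : ℝ) * M := by
    rw [hn]
    have := Finset.sum_le_card_nsmul (Finset.univ.filter (fun i => Γ ≤ g i))
      (fun i => (g i : ℝ)) (M : ℝ) (fun i _ => by simpa using (Nat.cast_le (α:=ℝ)).mpr (hgM i))
    simpa [nsmul_eq_mul] using this
  have hNp : (0:ℝ) < N := by exact_mod_cast hN
  have hwp : (0:ℝ) < w := by exact_mod_cast hw
  have hmp : (0:ℝ) < n M := by exact_mod_cast hm1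
  have h1mw : (0:ℝ) ≤ 1 - 1/(w:ℝ) := by
    rw [sub_nonneg, div_le_one hwp]; exact_mod_cast hw
  have key : (n Γ : ℝ)/w * (1 - 1/(w:ℝ)) ^ (n Γ - 1)
      ≤ (1 - 1/(n M : ℝ)) ^ (n M - 1) :=
    (frame_opt (n Γ) w hΓ hw).trans (seq_mono (n M) (n Γ) hm1 hmn)
  rw [hR, hR, sumT]
  apply sub_le_sub_right
  calc 1 / ((N:ℝ) * w) * (1 - 1/(w:ℝ)) ^ (n Γ - 1)
        * (∑ i ∈ Finset.univ.filter (fun i => Γ ≤ g i), (g i : ℝ))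
      ≤ 1 / ((N:ℝ) * w) * (1 - 1/(w:ℝ)) ^ (n Γ - 1) * ((n Γ : ℝ) * M) :=
        mul_le_mul_of_nonneg_left sumS (by positivity)
    _ = (M:ℝ)/N * ((n Γ : ℝ)/w * (1 - 1/(w:ℝ)) ^ (n Γ - 1)) := by
        field_simp
    _ ≤ (M:ℝ)/N * ((1 - 1/(n M : ℝ)) ^ (n M - 1)) := by
        apply mul_le_mul_of_nonneg_left key (by positivity)
    _ = 1 / ((N:ℝ) * (n M)) * (1 - 1/(n M : ℝ)) ^ (n M - 1) * ((n M : ℝ) * M) := by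
        field_simp
end

section
/- Let A be a finite type, S ⊆ A a nonempty subset, s : S → ℕ with s_a ≥ 1 for all a ∈ S, and let l be a natural number with l ≥ Σ_{a∈S} s_a. Suppose m* : A → ℕ with Σ_{a∈A} m*_a = l maximizes the product ∏_{a∈S} C(m_a, s_a) among all m : A → ℕ with Σ_{a∈A} m_a = l. Then (i) m*_a = 0 for every a ∈ A \ S, and (ii) for all a, b ∈ S, s_a·m*_b ≤ (m*_a + 1)·s_b (equivalently, m*_b/s_b − m*_a/s_a ≤ 1/s_a). (Lemma 2) -/
lemma sum_update_update_aux {A : Type*} [Fintype A] [DecidableEq A]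
    (m : A → ℕ) (a b : A) (hab : a ≠ b) (p q : ℕ) :
    ∑ x, Function.update (Function.update m a p) b q x + (m a + m b) = ∑ x, m x + (p + q) := by
  rw [Finset.sum_update_of_mem (Finset.mem_univ b)]
  rw [Finset.sdiff_singleton_eq_erase]
  rw [Finset.sum_update_of_mem (Finset.mem_erase.2 ⟨hab, Finset.mem_univ a⟩)]
  rw [Finset.sdiff_singleton_eq_erase]
  have h1 : ∑ x ∈ ((Finset.univ.erase b).erase a), m x + m a = ∑ x ∈ Finset.univ.erase b, m x :=
    Finset.sum_erase_add _ _ (Finset.mem_erase.2 ⟨hab, Finset.mem_univ a⟩)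
  have h2 : ∑ x ∈ Finset.univ.erase b, m x + m b = ∑ x, m x :=
    Finset.sum_erase_add _ _ (Finset.mem_univ b)
  omega

lemma prod_update_update_aux {A : Type*} [DecidableEq A]
    (S : Finset A) (g : A → ℕ) (a b : A) (ha : a ∈ S) (hb : b ∈ S) (hab : a ≠ b) (p q : ℕ) :
    ∏ x ∈ S, Function.update (Function.update g a p) b q x
      = p * q * ∏ x ∈ (S.erase b).erase a, g x := by
  rw [Finset.prod_update_of_mem hb, Finset.sdiff_singleton_eq_erase,
    Finset.prod_update_of_mem (Finset.mem_erase.2 ⟨hab, ha⟩), Finset.sdiff_singleton_eq_erase]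
  ring

lemma prod_split_two {A : Type*} [DecidableEq A]
    (S : Finset A) (g : A → ℕ) (a b : A) (ha : a ∈ S) (hb : b ∈ S) (hab : a ≠ b) :
    ∏ x ∈ S, g x = g a * g b * ∏ x ∈ (S.erase b).erase a, g x := by
  rw [← Finset.mul_prod_erase S g hb, ← Finset.mul_prod_erase (S.erase b) g
    (Finset.mem_erase.2 ⟨hab, ha⟩)]
  ring

/-- Lemma 2: any maximizer `m` (subject to `∑_a m_a = l`) of the likelihood product
`∏_{a ∈ S} C(m_a, s_a)` puts no mass outside `S` and satisfies the ratio condition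
`s_a·m_b ≤ (m_a + 1)·s_b` (i.e. `m_b/s_b − m_a/s_a ≤ 1/s_a`) for all `a, b ∈ S`. -/
theorem maximizer_supported_on_S_and_ratio_condition
    (A : Type*) [Fintype A] [DecidableEq A] (S : Finset A) (hS : S.Nonempty)
    (s : A → ℕ) (hs : ∀ a ∈ S, 1 ≤ s a) (l : ℕ) (hl : ∑ a ∈ S, s a ≤ l)
    (m : A → ℕ) (hm : ∑ a, m a = l)
    (hmax : ∀ m' : A → ℕ, ∑ a, m' a = l →
      ∏ a ∈ S, (m' a).choose (s a) ≤ ∏ a ∈ S, (m a).choose (s a)) :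
    (∀ a ∉ S, m a = 0) ∧
    (∀ a ∈ S, ∀ b ∈ S, s a * m b ≤ (m a + 1) * s b) := by
  classical
  obtain ⟨a0, ha0⟩ := hS
  set g : A → ℕ := fun x => (m x).choose (s x) with hg
  -- Step 1: positivity of every factor
  have hpos : ∀ a ∈ S, 0 < g a := by
    -- build a feasible point with product ≥ 1
    set f : A → ℕ := fun x => if x ∈ S then s x else 0 with hf
    set m₀ : A → ℕ := Function.update f a0 (s a0 + (l - ∑ a ∈ S, s a)) with hm₀
    have hfsum : ∑ x, f x = ∑ a ∈ S, s a := by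
      rw [hf]
      rw [Finset.sum_ite_mem, Finset.univ_inter]
    have hsum0 : ∑ x, m₀ x = l := by
      rw [hm₀, Finset.sum_update_of_mem (Finset.mem_univ a0),
        Finset.sdiff_singleton_eq_erase]
      have h2 : ∑ x ∈ Finset.univ.erase a0, f x + f a0 = ∑ x, f x :=
        Finset.sum_erase_add _ _ (Finset.mem_univ a0)
      have hfa0 : f a0 = s a0 := by simp [hf, ha0]
      omega
    have hone : 1 ≤ ∏ a ∈ S, (m₀ a).choose (s a) := by
      apply Finset.one_le_prod'
      intro x hx
      have : s x ≤ m₀ x := by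
        by_cases hxa : x = a0
        · subst hxa; simp [hm₀]
        · simp [hm₀, Function.update_of_ne hxa, hf, hx]
      exact Nat.one_le_iff_ne_zero.2 (Nat.choose_pos this).ne'
    have hprodpos : 0 < ∏ x ∈ S, g x := lt_of_lt_of_le hone (hmax m₀ hsum0)
    refine fun a ha => Nat.pos_of_ne_zero fun h0 => ?_
    rw [Finset.prod_eq_zero ha h0] at hprodpos
    exact lt_irrefl 0 hprodpos
  have hges : ∀ a ∈ S, s a ≤ m a := by
    intro a ha
    by_contra h
    exact absurd (Nat.choose_eq_zero_of_lt (by omega)) (hpos a ha).ne'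
  constructor
  · -- support part
    intro a ha
    by_contra h0
    have hma : 1 ≤ m a := by omega
    have hab : a ≠ a0 := fun h => ha (h ▸ ha0)
    set m' : A → ℕ := Function.update (Function.update m a (m a - 1)) a0 (m a0 + 1) with hm'
    have hsum' : ∑ x, m' x = l := by
      have h := sum_update_update_aux m a a0 hab (m a - 1) (m a0 + 1)
      rw [← hm'] at h
      omega
    have hple := hmax m' hsum'
    have hprodeq : ∏ x ∈ S, (m' x).choose (s x)
        = ∏ x ∈ S, Function.update g a0 ((m a0 + 1).choose (s a0)) x := by
      apply Finset.prod_congr rfl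
      intro x hx
      by_cases hx0 : x = a0
      · subst hx0; simp [hm', Function.update_of_ne hab.symm ]
      · have hxa : x ≠ a := fun h => ha (h ▸ hx)
        simp [hm', Function.update_of_ne hx0, Function.update_of_ne hxa, hg]
    rw [hprodeq, Finset.prod_update_of_mem ha0, Finset.sdiff_singleton_eq_erase] at hple
    rw [← Finset.mul_prod_erase S g ha0] at hple
    have hR : 0 < ∏ x ∈ S.erase a0, g x :=
      Finset.prod_pos (fun x hx => hpos x (Finset.mem_of_mem_erase hx))
    have hCC : g a0 < (m a0 + 1).choose (s a0) := by
      obtain ⟨t, ht⟩ : ∃ t, s a0 = t + 1 := ⟨s a0 - 1, by have := hs a0 ha0; omega⟩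
      have hts : t ≤ m a0 := by have := hges a0 ha0; omega
      have : (m a0 + 1).choose (t + 1) = (m a0).choose t + (m a0).choose (t + 1) :=
        Nat.choose_succ_succ _ _
      have hpos' : 0 < (m a0).choose t := Nat.choose_pos hts
      simp only [hg, ht]
      omega
    have hlt : g a0 * ∏ x ∈ S.erase a0, g x
        < (m a0 + 1).choose (s a0) * ∏ x ∈ S.erase a0, g x :=
      Nat.mul_lt_mul_of_pos_right hCC hR
    omega
  · -- ratio part
    intro a ha b hb
    by_cases hab : a = b
    · subst hab; nlinarith [hges a ha]
    · have hsb : s b ≤ m b := hges b hb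
      have hsa : s a ≤ m a := hges a ha
      have hb1 : 1 ≤ m b := le_trans (hs b hb) hsb
      set m' : A → ℕ := Function.update (Function.update m a (m a + 1)) b (m b - 1) with hm'
      have hsum' : ∑ x, m' x = l := by
        have h := sum_update_update_aux m a b hab (m a + 1) (m b - 1)
        rw [← hm'] at h
        omega
      have hple := hmax m' hsum'
      set Ca' := (m a + 1).choose (s a) with hCa'
      set Cb' := (m b - 1).choose (s b) with hCb'
      have hprodeq : ∏ x ∈ S, (m' x).choose (s x)
          = ∏ x ∈ S, Function.update (Function.update g a Ca') b Cb' x := by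
        apply Finset.prod_congr rfl
        intro x hx
        by_cases hxb : x = b
        · subst hxb; simp [hm', hCb']
        · by_cases hxa : x = a
          · subst hxa
            simp [hm', Function.update_of_ne hxb, hCa']
          · simp [hm', Function.update_of_ne hxb, Function.update_of_ne hxa, hg]
      rw [hprodeq, prod_update_update_aux S g a b ha hb hab] at hple
      rw [prod_split_two S g a b ha hb hab] at hple
      set R := ∏ x ∈ (S.erase b).erase a, g x with hR
      have hRpos : 0 < R :=
        Finset.prod_pos (fun x hx =>
          hpos x (Finset.mem_of_mem_erase (Finset.mem_of_mem_erase hx)))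
      have hle : Ca' * Cb' ≤ g a * g b := Nat.le_of_mul_le_mul_right (by nlinarith) hRpos
      have h1 : g a * (m a + 1) = Ca' * (m a + 1 - s a) := Nat.choose_mul_succ_eq (m a) (s a)
      have h2 : Cb' * m b = g b * (m b - s b) := by
        have := Nat.choose_mul_succ_eq (m b - 1) (s b)
        have hmb : m b - 1 + 1 = m b := by omega
        rw [hmb] at this
        simpa [hCb', hg] using this
      have key : (g a * g b) * ((m a + 1) * (m b - s b))
          ≤ (g a * g b) * ((m a + 1 - s a) * m b) := by
        calc (g a * g b) * ((m a + 1) * (m b - s b))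
            = (g a * (m a + 1)) * (g b * (m b - s b)) := by ring
          _ = (Ca' * (m a + 1 - s a)) * (Cb' * m b) := by rw [h1, h2]
          _ = (Ca' * Cb') * ((m a + 1 - s a) * m b) := by ring
          _ ≤ (g a * g b) * ((m a + 1 - s a) * m b) :=
              Nat.mul_le_mul_right _ hle
      have hgpos : 0 < g a * g b := Nat.mul_pos (hpos a ha) (hpos b hb)
      have key2 : (m a + 1) * (m b - s b) ≤ (m a + 1 - s a) * m b :=
        Nat.le_of_mul_le_mul_left key hgpos
      have hsa1 : s a ≤ m a + 1 := by omega
      zify [hsb, hsa1] at key2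
      zify
      nlinarith [key2]
end

section
/- Let m_a, s_a, m_b, s_b be natural numbers with m_a ≥ s_a ≥ 1 and m_b ≥ s_b ≥ 1. Then C(m_a + 1, s_a)·C(m_b − 1, s_b) ≤ C(m_a, s_a)·C(m_b, s_b) if and only if s_a·m_b ≤ (m_a + 1)·s_b (equivalently, m_b/s_b − m_a/s_a ≤ 1/s_a). -/
/-- The flipping equivalence (equations (45)/(24)): moving one unit of mass from
coordinate `b` to coordinate `a` does not increase the product of binomial coefficients
iff `s_a·m_b ≤ (m_a + 1)·s_b`. -/
theorem flip_binomial_product_iff (ma sa mb sb : ℕ)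
    (hsa : 1 ≤ sa) (hma : sa ≤ ma) (hsb : 1 ≤ sb) (hmb : sb ≤ mb) :
    (ma + 1).choose sa * (mb - 1).choose sb ≤ ma.choose sa * mb.choose sb ↔
      sa * mb ≤ (ma + 1) * sb := by
  have hsa' : sa ≤ ma + 1 := hma.trans (Nat.le_succ _)
  have h1 : ma.choose sa * (ma + 1) = (ma + 1).choose sa * (ma + 1 - sa) :=
    Nat.choose_mul_succ_eq ma sa
  have h2 : (mb - 1).choose sb * mb = mb.choose sb * (mb - sb) := by
    have := Nat.choose_mul_succ_eq (mb - 1) sb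
    have hmb1 : mb - 1 + 1 = mb := Nat.succ_pred_eq_of_pos (hsb.trans hmb)
    rw [hmb1] at this
    omega
  have hpos : 0 < (ma + 1 - sa) * mb := by
    have : 0 < mb := hsb.trans hmb
    have : 0 < ma + 1 - sa := by omega
    positivity
  have hC1 : 0 < ma.choose sa := Nat.choose_pos hma
  have hC2 : 0 < mb.choose sb := Nat.choose_pos hmb
  constructor
  · intro h
    have h' := Nat.mul_le_mul_right ((ma + 1 - sa) * mb) h
    have heq : (ma + 1).choose sa * (mb - 1).choose sb * ((ma + 1 - sa) * mb)
        = ma.choose sa * mb.choose sb * ((ma + 1) * (mb - sb)) := by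
      calc (ma + 1).choose sa * (mb - 1).choose sb * ((ma + 1 - sa) * mb)
          = ((ma + 1).choose sa * (ma + 1 - sa)) * ((mb - 1).choose sb * mb) := by ring
        _ = (ma.choose sa * (ma + 1)) * (mb.choose sb * (mb - sb)) := by rw [← h1, h2]
        _ = ma.choose sa * mb.choose sb * ((ma + 1) * (mb - sb)) := by ring
    rw [heq] at h'
    have h'' : (ma + 1) * (mb - sb) ≤ (ma + 1 - sa) * mb := by
      have := Nat.le_of_mul_le_mul_left
        (by calc ma.choose sa * mb.choose sb * ((ma + 1) * (mb - sb))
              ≤ ma.choose sa * mb.choose sb * ((ma + 1 - sa) * mb) := by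
                  rw [mul_comm (ma.choose sa) (mb.choose sb)] at h' ⊢
                  linarith [h'])
        (Nat.mul_pos hC1 hC2)
      exact this
    zify [hmb, hsa'] at h''
    nlinarith
  · intro h
    have h'' : (ma + 1) * (mb - sb) ≤ (ma + 1 - sa) * mb := by
      zify [hmb, hsa']
      nlinarith
    have h' : ma.choose sa * mb.choose sb * ((ma + 1) * (mb - sb))
        ≤ ma.choose sa * mb.choose sb * ((ma + 1 - sa) * mb) :=
      Nat.mul_le_mul_left _ h''
    have heq : (ma + 1).choose sa * (mb - 1).choose sb * ((ma + 1 - sa) * mb)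
        = ma.choose sa * mb.choose sb * ((ma + 1) * (mb - sb)) := by
      calc (ma + 1).choose sa * (mb - 1).choose sb * ((ma + 1 - sa) * mb)
          = ((ma + 1).choose sa * (ma + 1 - sa)) * ((mb - 1).choose sb * mb) := by ring
        _ = (ma.choose sa * (ma + 1)) * (mb.choose sb * (mb - sb)) := by rw [← h1, h2]
        _ = ma.choose sa * mb.choose sb * ((ma + 1) * (mb - sb)) := by ring
    rw [← heq] at h'
    exact Nat.le_of_mul_le_mul_right h' hpos
end

section
/- Let S be a nonempty finite type, s : S → ℕ with s_a ≥ 1 for all a ∈ S, n_S = Σ_{a∈S} s_a, and let m : S → ℕ with Σ_{a∈S} m_a = l. Suppose that for all a, b ∈ S, s_a·m_b ≤ (m_a + 1)·s_b. Then, with k' = ⌊l / n_S⌋, every a ∈ S satisfies k'·s_a ≤ m_a ≤ (k' + 1)·s_a; that is, m_a = k'·s_a + r_a for some integer r_a with 0 ≤ r_a ≤ s_a. (Lemma 3) -/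
/-- Lemma 3: if `m : S → ℕ` with `∑_a m_a = l` satisfies the pairwise optimality
condition `s_a·m_b ≤ (m_a + 1)·s_b`, then with `k' = ⌊l / n_S⌋` every coordinate
satisfies `k'·s_a ≤ m_a ≤ (k' + 1)·s_a`. -/
theorem ratio_condition_implies_floor_bounds
    (S : Type*) [Fintype S] [Nonempty S]
    (s : S → ℕ) (hs : ∀ a, 1 ≤ s a) (nS : ℕ) (hnS : nS = ∑ a, s a)
    (l : ℕ) (m : S → ℕ) (hm : ∑ a, m a = l)
    (hcond : ∀ a b, s a * m b ≤ (m a + 1) * s b) :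
    ∀ a, (l / nS) * s a ≤ m a ∧ m a ≤ (l / nS + 1) * s a := by
  intro a
  have hnSpos : 0 < nS := by
    rw [hnS]; exact Finset.sum_pos (fun b _ => hs b) Finset.univ_nonempty
  set k := l / nS with hk
  have hkl : k * nS ≤ l := Nat.div_mul_le_self l nS
  have hl : l < (k + 1) * nS := by

    have h2 := Nat.div_add_mod l nS
    have h3 := Nat.mod_lt l hnSpos
    rw [← hk] at h2
    nlinarith
  constructor
  · by_contra h
    push_neg at h
    have hb : ∀ b, m b ≤ k * s b := fun b => by
      have h1 : s a * m b ≤ (m a + 1) * s b := hcond a b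
      have h2 : (m a + 1) * s b ≤ (k * s a) * s b :=
        Nat.mul_le_mul_right _ (Nat.succ_le_of_lt h)
      have h3 : s a * m b ≤ s a * (k * s b) := by
        calc s a * m b ≤ k * s a * s b := h1.trans h2
        _ = s a * (k * s b) := by ring
      exact Nat.le_of_mul_le_mul_left h3 (hs a)
    have hlt : l < k * nS := by
      rw [← hm, hnS, Finset.mul_sum]
      exact Finset.sum_lt_sum (fun b _ => hb b) ⟨a, Finset.mem_univ a, h⟩
    omega
  · by_contra h
    push_neg at h
    have hb : ∀ b, (k + 1) * s b ≤ m b := fun b => by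
      have h1 : s b * m a ≤ (m b + 1) * s a := hcond b a
      have h2 : s b * ((k + 1) * s a + 1) ≤ s b * m a :=
        Nat.mul_le_mul_left _ (Nat.succ_le_of_lt h)
      have h3 : ((k + 1) * s b) * s a < (m b + 1) * s a := by
        calc ((k + 1) * s b) * s a < s b * ((k + 1) * s a + 1) := by
              have := hs b; nlinarith
        _ ≤ (m b + 1) * s a := h2.trans h1
      have := Nat.lt_of_mul_lt_mul_right h3
      omega
    have hlt : (k + 1) * nS < l := by
      rw [← hm, hnS, Finset.mul_sum]
      exact Finset.sum_lt_sum (fun b _ => hb b) ⟨a, Finset.mem_univ a, by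
        calc (k + 1) * s a ≤ m a - 1 := by omega
        _ < m a := by omega⟩
    omega
end

section
/- Let S be a finite type, s : S → ℕ with s_a ≥ 1 for all a ∈ S, and m : S → ℕ such that s_a·m_b ≤ (m_a + 1)·s_b for all a, b ∈ S. Let J ∈ S satisfy (m_J + 1)·s_a ≤ (m_a + 1)·s_J for all a ∈ S (i.e., J minimizes (m_a + 1)/s_a over S). Define m′ : S → ℕ by m′_J = m_J + 1 and m′_a = m_a for a ≠ J. Then s_a·m′_b ≤ (m′_a + 1)·s_b for all a, b ∈ S. -/
/-- Induction step of Algorithm 2: incrementing the coordinate `J` minimizing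
`(m_a + 1)/s_a` preserves the pairwise condition `s_a·m_b ≤ (m_a + 1)·s_b`. -/
theorem algorithm2_step_preserves_condition
    (S : Type*) [Fintype S] [DecidableEq S]
    (s : S → ℕ) (hs : ∀ a, 1 ≤ s a)
    (m : S → ℕ) (hcond : ∀ a b, s a * m b ≤ (m a + 1) * s b)
    (J : S) (hJ : ∀ a, (m J + 1) * s a ≤ (m a + 1) * s J)
    (m' : S → ℕ) (hm' : ∀ a, m' a = if a = J then m J + 1 else m a) :
    ∀ a b, s a * m' b ≤ (m' a + 1) * s b := by
  intro a b
  rw [hm' a, hm' b]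
  by_cases hb : b = J <;> by_cases ha : a = J <;> simp [ha, hb]
  · nlinarith [hs J]
  · have := hJ a; nlinarith
  · have := hcond J b; nlinarith
  · exact hcond a b
end

section
/- Let S be a nonempty finite type, s : S → ℕ with s_a ≥ 1 for all a ∈ S, n_S = Σ_{a∈S} s_a, and let l be a natural number with l ≥ n_S. Then every m* : S → ℕ with Σ_{a∈S} m*_a = l that maximizes ∏_{a∈S} C(m_a, s_a) among all m : S → ℕ with Σ_{a∈S} m_a = l satisfies ⌊l/n_S⌋·s_a ≤ m*_a ≤ (⌊l/n_S⌋ + 1)·s_a for every a ∈ S; that is, m*_a = ⌊l/n_S⌋·s_a + r_a with 0 ≤ r_a ≤ s_a. (Structural content of Proposition 1) -/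
private lemma choose_shift (n k : ℕ) :
    (n + 1 - k) * (n + 1).choose k = (n + 1) * n.choose k := by
  rw [mul_comm, ← Nat.choose_succ_right_eq]
  exact (Nat.add_one_mul_choose_eq n k).symm

/-- Key local-move inequality on binomial coefficients. -/
private lemma key_ineq (A B sa sb : ℕ) (hA : sa < A) (hB : sb ≤ B)
    (h : (B + 1) * sa < sb * A) :
    B.choose sb * A.choose sa < (B + 1).choose sb * (A - 1).choose sa := by
  have hApos : 0 < A := lt_of_le_of_lt (Nat.zero_le _) hA
  have hc : 0 < A * (B + 1 - sb) := by
    have : 0 < B + 1 - sb := by omega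
    positivity
  refine Nat.lt_of_mul_lt_mul_left (a := A * (B + 1 - sb)) ?_
  have hX : 0 < B.choose sb * A.choose sa :=
    Nat.mul_pos (Nat.choose_pos hB) (Nat.choose_pos hA.le)
  have hI1 : (B + 1 - sb) * (B + 1).choose sb = (B + 1) * B.choose sb :=
    choose_shift B sb
  have hI2 : (A - sa) * A.choose sa = A * (A - 1).choose sa := by
    have := choose_shift (A - 1) sa
    have hA1 : A - 1 + 1 = A := by omega
    rw [hA1] at this
    have hA2 : A - sa = A - 1 + 1 - sa := by omega
    rw [hA2, hA1] at this ⊢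
    exact this
  have hlin : A * (B + 1 - sb) < (B + 1) * (A - sa) := by
    have hb1 : sb ≤ B + 1 := by omega
    have h' : ((B : ℤ) + 1) * sa < (sb : ℤ) * A := by exact_mod_cast h
    zify [hA.le, hb1]
    nlinarith [h']
  calc A * (B + 1 - sb) * (B.choose sb * A.choose sa)
      < (B + 1) * (A - sa) * (B.choose sb * A.choose sa) :=
        Nat.mul_lt_mul_of_lt_of_le hlin le_rfl hX
    _ = (B + 1) * B.choose sb * ((A - sa) * A.choose sa) := by ring
    _ = (B + 1 - sb) * (B + 1).choose sb * (A * (A - 1).choose sa) := by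
        rw [hI1, hI2]
    _ = A * (B + 1 - sb) * ((B + 1).choose sb * (A - 1).choose sa) := by ring

private lemma sum_split {S : Type*} [Fintype S] [DecidableEq S]
    (f : S → ℕ) (a b : S) (hab : a ≠ b) :
    ∑ c, f c = f a + f b + ∑ c ∈ Finset.univ \ {a, b}, f c := by
  have hsub : ({a, b} : Finset S) ⊆ Finset.univ := Finset.subset_univ _
  rw [← Finset.sum_sdiff hsub, Finset.sum_pair hab]
  ring

private lemma prod_split {S : Type*} [Fintype S] [DecidableEq S]
    (f : S → ℕ) (a b : S) (hab : a ≠ b) :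
    ∏ c, f c = f a * f b * ∏ c ∈ Finset.univ \ {a, b}, f c := by
  have hsub : ({a, b} : Finset S) ⊆ Finset.univ := Finset.subset_univ _
  rw [← Finset.prod_sdiff hsub, Finset.prod_pair hab]
  ring

/-- Structural content of Proposition 1: any maximizer `m` of `∏_a C(m_a, s_a)` subject
to `∑_a m_a = l` satisfies `⌊l/n_S⌋·s_a ≤ m_a ≤ (⌊l/n_S⌋ + 1)·s_a` for every `a`. -/
theorem maximizer_floor_bounds
    (S : Type*) [Fintype S] [Nonempty S]
    (s : S → ℕ) (hs : ∀ a, 1 ≤ s a) (nS : ℕ) (hnS : nS = ∑ a, s a)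
    (l : ℕ) (hl : nS ≤ l)
    (m : S → ℕ) (hm : ∑ a, m a = l)
    (hmax : ∀ m' : S → ℕ, ∑ a, m' a = l →
      ∏ a, (m' a).choose (s a) ≤ ∏ a, (m a).choose (s a)) :
    ∀ a, (l / nS) * s a ≤ m a ∧ m a ≤ (l / nS + 1) * s a := by
  classical
  set q := l / nS with hq
  have hnSpos : 0 < nS := by
    rw [hnS]
    exact Finset.sum_pos (fun a _ => hs a) Finset.univ_nonempty
  have hq1 : 1 ≤ q := (Nat.one_le_div_iff hnSpos).mpr hl
  have hqmul : q * nS ≤ l := Nat.div_mul_le_self l nS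
  have hlub : l < (q + 1) * nS := by
    have h1 := Nat.div_add_mod l nS
    have h2 := Nat.mod_lt l hnSpos
    rw [← hq] at h1
    have h3 : (q + 1) * nS = nS * q + nS := by ring
    linarith
  -- the maximum is positive
  obtain ⟨a0⟩ := ‹Nonempty S›
  set m0 : S → ℕ := fun c => q * s c + (if c = a0 then l - q * nS else 0) with hm0
  have hm0sum : ∑ c, m0 c = l := by
    rw [hm0]
    rw [Finset.sum_add_distrib, Finset.sum_ite_eq' Finset.univ a0]
    simp only [Finset.mem_univ, if_true, ← Finset.mul_sum, ← hnS]
    omega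
  have hm0pos : 0 < ∏ c, (m0 c).choose (s c) := by
    apply Finset.prod_pos
    intro c _
    apply Nat.choose_pos
    have : s c ≤ q * s c := Nat.le_mul_of_pos_left _ hq1
    have : q * s c ≤ m0 c := by rw [hm0]; simp
    omega
  have hPpos : 0 < ∏ c, (m c).choose (s c) :=
    lt_of_lt_of_le hm0pos (hmax m0 hm0sum)
  have hms : ∀ c, s c ≤ m c := by
    intro c
    by_contra hc
    push_neg at hc
    have : (m c).choose (s c) = 0 := Nat.choose_eq_zero_of_lt hc
    have : ∏ c, (m c).choose (s c) = 0 :=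
      Finset.prod_eq_zero (Finset.mem_univ c) this
    omega
  intro a
  constructor
  · -- lower bound
    by_contra hlow
    push_neg at hlow
    -- find b with q * s b < m b
    have hexb : ∃ b, q * s b < m b := by
      by_contra hall
      push_neg at hall
      have hstrict : ∑ c, m c < ∑ c, q * s c :=
        Finset.sum_lt_sum (fun c _ => hall c) ⟨a, Finset.mem_univ a, hlow⟩
      rw [hm, ← Finset.mul_sum, ← hnS] at hstrict
      omega
    obtain ⟨b, hb⟩ := hexb
    have hab : a ≠ b := by
      intro h; rw [h] at hlow; omega
    set m' : S → ℕ := fun c => if c = a then m a + 1 else if c = b then m b - 1 else m c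
      with hm'
    have hm'a : m' a = m a + 1 := by simp [hm']
    have hm'b : m' b = m b - 1 := by simp [hm', hab.symm]
    have hm'c : ∀ c ∈ Finset.univ \ ({a, b} : Finset S), m' c = m c := by
      intro c hc
      simp only [Finset.mem_sdiff, Finset.mem_insert, Finset.mem_singleton] at hc
      push_neg at hc
      simp [hm', hc.2.1, hc.2.2]
    have hmbpos : 1 ≤ m b := le_trans (hs b) (hms b)
    have hsum' : ∑ c, m' c = l := by
      have hT := sum_split m a b hab
      have hT' := sum_split m' a b hab
      have heq : ∑ c ∈ Finset.univ \ ({a, b} : Finset S), m' c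
          = ∑ c ∈ Finset.univ \ ({a, b} : Finset S), m c :=
        Finset.sum_congr rfl hm'c
      rw [heq, hm'a, hm'b] at hT'
      omega
    -- key inequality: roles A = m b (decreased), B = m a (increased)
    have hkey : (m a).choose (s a) * (m b).choose (s b) <
        (m a + 1).choose (s a) * (m b - 1).choose (s b) := by
      apply key_ineq
      · have h1 : s b ≤ q * s b := Nat.le_mul_of_pos_left _ hq1
        have h2 := hms b
        omega
      · exact hms a
      · -- (m a + 1) * s b < s a * m b
        have h1 : m a + 1 ≤ q * s a := hlow
        have h2 : q * s b + 1 ≤ m b := hb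
        nlinarith [hs a, hs b]
    have hR : 0 < ∏ c ∈ Finset.univ \ ({a, b} : Finset S), (m c).choose (s c) :=
      Finset.prod_pos (fun c _ => Nat.choose_pos (hms c))
    have hprod : ∏ c, (m c).choose (s c) < ∏ c, (m' c).choose (s c) := by
      rw [prod_split (fun c => (m c).choose (s c)) a b hab,
          prod_split (fun c => (m' c).choose (s c)) a b hab]
      have htail : ∏ c ∈ Finset.univ \ ({a, b} : Finset S), (m' c).choose (s c)
          = ∏ c ∈ Finset.univ \ ({a, b} : Finset S), (m c).choose (s c) :=
        Finset.prod_congr rfl (fun c hc => by rw [hm'c c hc])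
      rw [htail, hm'a, hm'b]
      exact Nat.mul_lt_mul_of_lt_of_le hkey le_rfl hR
    exact absurd (hmax m' hsum') (not_le.mpr hprod)
  · -- upper bound
    by_contra hhigh
    push_neg at hhigh
    -- find b with m b < (q+1) * s b
    have hexb : ∃ b, m b < (q + 1) * s b := by
      by_contra hall
      push_neg at hall
      have hge : ∑ c, (q + 1) * s c ≤ ∑ c, m c :=
        Finset.sum_le_sum (fun c _ => hall c)
      rw [hm, ← Finset.mul_sum, ← hnS] at hge
      omega
    obtain ⟨b, hb⟩ := hexb
    have hab : a ≠ b := by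
      intro h; rw [h] at hhigh; omega
    set m' : S → ℕ := fun c => if c = a then m a - 1 else if c = b then m b + 1 else m c
      with hm'
    have hm'a : m' a = m a - 1 := by simp [hm']
    have hm'b : m' b = m b + 1 := by simp [hm', hab.symm]
    have hm'c : ∀ c ∈ Finset.univ \ ({a, b} : Finset S), m' c = m c := by
      intro c hc
      simp only [Finset.mem_sdiff, Finset.mem_insert, Finset.mem_singleton] at hc
      push_neg at hc
      simp [hm', hc.2.1, hc.2.2]
    have hmapos : 1 ≤ m a := le_trans (hs a) (hms a)
    have hsum' : ∑ c, m' c = l := by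
      have hT := sum_split m a b hab
      have hT' := sum_split m' a b hab
      have heq : ∑ c ∈ Finset.univ \ ({a, b} : Finset S), m' c
          = ∑ c ∈ Finset.univ \ ({a, b} : Finset S), m c :=
        Finset.sum_congr rfl hm'c
      rw [heq, hm'a, hm'b] at hT'
      omega
    -- key inequality: roles A = m a (decreased), B = m b (increased)
    have hkey : (m b).choose (s b) * (m a).choose (s a) <
        (m b + 1).choose (s b) * (m a - 1).choose (s a) := by
      apply key_ineq
      · -- s a < m a
        have : (q + 1) * s a + 1 ≤ m a := hhigh
        nlinarith [hs a]
      · exact hms b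
      · -- (m b + 1) * s a < s b * m a
        have h1 : m b + 1 ≤ (q + 1) * s b := hb
        have h2 : (q + 1) * s a + 1 ≤ m a := hhigh
        nlinarith [hs a, hs b]
    have hR : 0 < ∏ c ∈ Finset.univ \ ({a, b} : Finset S), (m c).choose (s c) :=
      Finset.prod_pos (fun c _ => Nat.choose_pos (hms c))
    have hprod : ∏ c, (m c).choose (s c) < ∏ c, (m' c).choose (s c) := by
      rw [prod_split (fun c => (m c).choose (s c)) a b hab,
          prod_split (fun c => (m' c).choose (s c)) a b hab]
      have htail : ∏ c ∈ Finset.univ \ ({a, b} : Finset S), (m' c).choose (s c)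
          = ∏ c ∈ Finset.univ \ ({a, b} : Finset S), (m c).choose (s c) :=
        Finset.prod_congr rfl (fun c hc => by rw [hm'c c hc])
      rw [htail, hm'a, hm'b]
      calc (m a).choose (s a) * (m b).choose (s b) *
            ∏ c ∈ Finset.univ \ ({a, b} : Finset S), (m c).choose (s c)
          = (m b).choose (s b) * (m a).choose (s a) *
            ∏ c ∈ Finset.univ \ ({a, b} : Finset S), (m c).choose (s c) := by ring
        _ < (m b + 1).choose (s b) * (m a - 1).choose (s a) *
            ∏ c ∈ Finset.univ \ ({a, b} : Finset S), (m c).choose (s c) :=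
            Nat.mul_lt_mul_of_lt_of_le hkey le_rfl hR
        _ = (m a - 1).choose (s a) * (m b + 1).choose (s b) *
            ∏ c ∈ Finset.univ \ ({a, b} : Finset S), (m c).choose (s c) := by ring
    exact absurd (hmax m' hsum') (not_le.mpr hprod)
end

section
/- Let N ≥ 1, g : Fin N → ℕ, Γ ∈ ℕ, and let A = {i ∈ Fin N : g(i) ≥ Γ} be the active set with n = |A| ≥ 1; let w ≥ 1 be an integer. For a function f : A → Fin w, define the age reduction r_i(f) = g(i) − w (as an integer) if i ∈ A and f(j) ≠ f(i) for all j ∈ A with j ≠ i, and r_i(f) = −w otherwise (in particular for every i ∉ A). Then (1/w^n) · Σ_{f : A → Fin w} Σ_{i ∈ Fin N} r_i(f) = (1 − 1/w)^{n−1} · Σ_{i∈A} g(i) − N·w. Equivalently, the normalized average AoI reduction satisfies R̄ = (1/(N·w))·(1 − 1/w)^{n−1}·Σ_{i∈A} g(i) − 1. (Equations (6)–(8)) -/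
lemma count_sum_TDFSA {A : Type*} [Fintype A] [DecidableEq A] (w : ℕ) (i0 : A) :
    ∑ f : A → Fin w, (if ∀ j, j ≠ i0 → f j ≠ f i0 then (1:ℝ) else 0)
      = w * ((w : ℝ) - 1) ^ (Fintype.card A - 1) := by
  rw [← Equiv.sum_comp (Equiv.funSplitAt i0 (Fin w)).symm, Fintype.sum_prod_type]
  have key : ∀ (c : Fin w) (f' : {j // j ≠ i0} → Fin w),
      (if ∀ j, j ≠ i0 → (Equiv.funSplitAt i0 (Fin w)).symm (c, f') j
          ≠ (Equiv.funSplitAt i0 (Fin w)).symm (c, f') i0 then (1:ℝ) else 0)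
      = ∏ j' : {j // j ≠ i0}, (if f' j' ≠ c then (1:ℝ) else 0) := by
    intro c f'
    have hi0 : (Equiv.funSplitAt i0 (Fin w)).symm (c, f') i0 = c := by
      simp [Equiv.funSplitAt, Equiv.piSplitAt]
    have hj : ∀ (j' : {j // j ≠ i0}),
        (Equiv.funSplitAt i0 (Fin w)).symm (c, f') j' = f' j' := by
      intro j'
      simp [Equiv.funSplitAt, Equiv.piSplitAt, j'.2]
    have hcond : (∀ j, j ≠ i0 → (Equiv.funSplitAt i0 (Fin w)).symm (c, f') j
          ≠ (Equiv.funSplitAt i0 (Fin w)).symm (c, f') i0)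
        ↔ ∀ j' : {j // j ≠ i0}, f' j' ≠ c := by
      rw [hi0]
      constructor
      · intro H j'; rw [← hj j']; exact H j' j'.2
      · intro H j hne; rw [show (j : A) = (⟨j, hne⟩ : {j // j ≠ i0}) from rfl, hj]
        exact H _
    rw [if_congr hcond rfl rfl]
    by_cases H : ∀ j' : {j // j ≠ i0}, f' j' ≠ c
    · rw [if_pos H, Finset.prod_eq_one]
      intro j' _; rw [if_pos (H j')]
    · rw [if_neg H]
      push_neg at H
      obtain ⟨j', hj'⟩ := H
      exact (Finset.prod_eq_zero (Finset.mem_univ j') (by simp [hj'])).symm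
  simp only [key]
  have inner : ∀ c : Fin w, ∑ f' : {j // j ≠ i0} → Fin w,
      ∏ j' : {j // j ≠ i0}, (if f' j' ≠ c then (1:ℝ) else 0)
      = ((w : ℝ) - 1) ^ (Fintype.card A - 1) := by
    intro c
    have h1 : ∑ f' : {j // j ≠ i0} → Fin w,
        ∏ j' : {j // j ≠ i0}, (if f' j' ≠ c then (1:ℝ) else 0)
        = ∏ j' : {j // j ≠ i0}, ∑ b : Fin w, (if b ≠ c then (1:ℝ) else 0) := by
      rw [Finset.prod_univ_sum, Fintype.piFinset_univ]
    rw [h1]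
    have h2 : ∑ b : Fin w, (if b ≠ c then (1:ℝ) else 0) = (w : ℝ) - 1 := by
      have : ∀ b : Fin w, (if b ≠ c then (1:ℝ) else 0)
          = 1 - (if b = c then (1:ℝ) else 0) := by
        intro b; by_cases h : b = c <;> simp [h]
      simp only [this, Finset.sum_sub_distrib, Finset.sum_const, Finset.sum_ite_eq',
        Finset.mem_univ, if_pos]
      simp
    rw [h2, Finset.prod_const, Finset.card_univ]
    congr 1
    rw [Fintype.card_subtype_compl]
    simp
  simp only [inner, Finset.sum_const, Finset.card_univ, Fintype.card_fin, nsmul_eq_mul]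

/-- Equations (6)–(8): averaging the age reductions over all `w^n` slot-choice functions
of the `n` active nodes gives
`(1/w^n)·∑_f ∑_i r_i(f) = (1 − 1/w)^(n−1)·∑_{i ∈ A} g_i − N·w`, and hence the
normalized average AoI reduction is
`R̄ = (1/(N·w))·(1 − 1/w)^(n−1)·∑_{i ∈ A} g_i − 1`. -/
theorem ideal_TDFSA_average_AoI_reduction
    (N : ℕ) (hN : 1 ≤ N) (g : Fin N → ℕ) (Γ : ℕ)
    (n : ℕ) (hn : n = (Finset.univ.filter (fun i => Γ ≤ g i)).card) (hn1 : 1 ≤ n)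
    (w : ℕ) (hw : 1 ≤ w)
    (r : ({i : Fin N // Γ ≤ g i} → Fin w) → Fin N → ℤ)
    (hr : ∀ f i, r f i =
      if h : Γ ≤ g i then
        (if ∀ j : {i : Fin N // Γ ≤ g i}, j ≠ ⟨i, h⟩ → f j ≠ f ⟨i, h⟩
          then (g i : ℤ) - (w : ℤ) else -(w : ℤ))
      else -(w : ℤ)) :
    ((1 / (w : ℝ) ^ n) *
        ∑ f : {i : Fin N // Γ ≤ g i} → Fin w, ∑ i, ((r f i : ℤ) : ℝ)
      = (1 - 1 / (w : ℝ)) ^ (n - 1) *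
          (∑ i ∈ Finset.univ.filter (fun i => Γ ≤ g i), (g i : ℝ)) - (N : ℝ) * w) ∧
    ((1 / ((N : ℝ) * w)) *
        ((1 / (w : ℝ) ^ n) *
          ∑ f : {i : Fin N // Γ ≤ g i} → Fin w, ∑ i, ((r f i : ℤ) : ℝ))
      = (1 / ((N : ℝ) * w)) * (1 - 1 / (w : ℝ)) ^ (n - 1) *
          (∑ i ∈ Finset.univ.filter (fun i => Γ ≤ g i), (g i : ℝ)) - 1) := by
  have hcard : Fintype.card {i : Fin N // Γ ≤ g i} = n := by
    rw [hn, Fintype.card_subtype]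
  have hw0 : (w : ℝ) ≠ 0 := by positivity
  have hN0 : (N : ℝ) ≠ 0 := by positivity
  have hsummand : ∀ (f : {i : Fin N // Γ ≤ g i} → Fin w) (i : Fin N), ((r f i : ℤ) : ℝ)
      = (if h : Γ ≤ g i then
          (if ∀ j : {i : Fin N // Γ ≤ g i}, j ≠ ⟨i, h⟩ → f j ≠ f ⟨i, h⟩
            then (g i : ℝ) else 0)
        else 0) - (w : ℝ) := by
    intro f i
    rw [hr]
    split_ifs <;> push_cast <;> ring
  have hinner : ∀ f : {i : Fin N // Γ ≤ g i} → Fin w, ∑ i, ((r f i : ℤ) : ℝ)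
      = (∑ i0 : {i : Fin N // Γ ≤ g i},
            (if ∀ j : {i : Fin N // Γ ≤ g i}, j ≠ i0 → f j ≠ f i0
              then (g (i0 : Fin N) : ℝ) else 0))
        - (N : ℝ) * w := by
    intro f
    simp only [hsummand, Finset.sum_sub_distrib, Finset.sum_const, Finset.card_univ,
      Fintype.card_fin, nsmul_eq_mul]
    congr 1
    rw [← Finset.sum_filter_of_ne (p := fun i => Γ ≤ g i)
        (by intro x _ hx; by_contra h; simp [h] at hx),
      Finset.sum_subtype (p := fun i => Γ ≤ g i) _ (by intro x; simp)]
    apply Finset.sum_congr rfl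
    intro i0 _
    rcases i0 with ⟨i, hi⟩
    rw [dif_pos hi]
  have hkey : ∀ i0 : {i : Fin N // Γ ≤ g i},
      ∑ f : {i : Fin N // Γ ≤ g i} → Fin w,
        (if ∀ j : {i : Fin N // Γ ≤ g i}, j ≠ i0 → f j ≠ f i0
          then (g (i0 : Fin N) : ℝ) else 0)
      = (g (i0 : Fin N) : ℝ) * ((w : ℝ) * ((w : ℝ) - 1) ^ (n - 1)) := by
    intro i0
    have h : ∀ f : {i : Fin N // Γ ≤ g i} → Fin w,
        (if ∀ j : {i : Fin N // Γ ≤ g i}, j ≠ i0 → f j ≠ f i0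
            then (g (i0 : Fin N) : ℝ) else 0)
        = (g (i0 : Fin N) : ℝ) *
          (if ∀ j : {i : Fin N // Γ ≤ g i}, j ≠ i0 → f j ≠ f i0 then (1:ℝ) else 0) := by
      intro f; split_ifs <;> simp
    simp only [h, ← Finset.mul_sum]
    rw [count_sum_TDFSA w i0, hcard]
  have htotal : ∑ f : {i : Fin N // Γ ≤ g i} → Fin w, ∑ i, ((r f i : ℤ) : ℝ)
      = ((w : ℝ) * ((w : ℝ) - 1) ^ (n - 1)) *
          (∑ i ∈ Finset.univ.filter (fun i => Γ ≤ g i), (g i : ℝ))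
        - (w : ℝ) ^ n * ((N : ℝ) * w) := by
    simp only [hinner, Finset.sum_sub_distrib, Finset.sum_const, Finset.card_univ,
      nsmul_eq_mul]
    rw [Finset.sum_comm]
    simp only [hkey]
    rw [← Finset.sum_mul, mul_comm]
    congr 2
    · rw [Finset.sum_subtype (p := fun i => Γ ≤ g i) _ (by intro x; simp)
        (fun i => (g i : ℝ))]
    · rw [Fintype.card_fun, Fintype.card_fin, hcard]
      push_cast
      ring
  have hpow : (1 / (w : ℝ) ^ n) * ((w : ℝ) * ((w : ℝ) - 1) ^ (n - 1))
      = (1 - 1 / (w : ℝ)) ^ (n - 1) := by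
    obtain ⟨m, rfl⟩ : ∃ m, n = m + 1 := ⟨n - 1, (Nat.succ_pred_eq_of_pos hn1).symm⟩
    have h1 : (1 - 1 / (w : ℝ)) = ((w : ℝ) - 1) / w := by field_simp
    rw [h1, div_pow, pow_succ]
    simp only [Nat.add_sub_cancel]
    field_simp
  have part1 : (1 / (w : ℝ) ^ n) *
      ∑ f : {i : Fin N // Γ ≤ g i} → Fin w, ∑ i, ((r f i : ℤ) : ℝ)
      = (1 - 1 / (w : ℝ)) ^ (n - 1) *
          (∑ i ∈ Finset.univ.filter (fun i => Γ ≤ g i), (g i : ℝ)) - (N : ℝ) * w := by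
    rw [htotal, mul_sub, ← mul_assoc, hpow]
    congr 1
    rw [← mul_assoc, one_div, inv_mul_cancel₀ (by positivity), one_mul]
  refine ⟨part1, ?_⟩
  rw [part1, mul_sub]
  congr 1
  · ring
  · rw [one_div, mul_comm, mul_inv_cancel₀ (by positivity)]
end

section
/- Let S be a nonempty finite type, s : S → ℕ with s_a ≥ 1 for all a ∈ S, and n_S = Σ_{a∈S} s_a. Then for every natural number l there exists m : S → ℕ with Σ_{a∈S} m_a = l such that ⌊l/n_S⌋·s_a ≤ m_a ≤ (⌊l/n_S⌋ + 1)·s_a for every a ∈ S and s_a·m_b ≤ (m_a + 1)·s_b for all a, b ∈ S. (Feasibility of the output of Algorithm 2) -/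
/-- Feasibility of the output of Algorithm 2: for every budget `l` there is an
allocation `m` with `∑_a m_a = l`, the floor bounds
`⌊l/n_S⌋·s_a ≤ m_a ≤ (⌊l/n_S⌋ + 1)·s_a`, and the pairwise optimality condition
`s_a·m_b ≤ (m_a + 1)·s_b`. -/
theorem algorithm2_output_feasible
    (S : Type*) [Fintype S] [Nonempty S]
    (s : S → ℕ) (hs : ∀ a, 1 ≤ s a) (nS : ℕ) (hnS : nS = ∑ a, s a) (l : ℕ) :
    ∃ m : S → ℕ, (∑ a, m a = l) ∧
      (∀ a, (l / nS) * s a ≤ m a ∧ m a ≤ (l / nS + 1) * s a) ∧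
      (∀ a b, s a * m b ≤ (m a + 1) * s b) := by
  classical
  have hnSpos : 0 < nS := by
    rw [hnS]
    have : (0 : ℕ) < ∑ a : S, 1 := by simp [Finset.card_univ, Fintype.card_pos]
    exact lt_of_lt_of_le this (Finset.sum_le_sum fun a _ => hs a)
  -- Step 1: construct m with the sum and pairwise conditions, by induction on l
  have key : ∀ L : ℕ, ∃ m : S → ℕ, (∑ a, m a = L) ∧
      ∀ a b, s a * m b ≤ (m a + 1) * s b := by
    intro L
    induction L with
    | zero =>
      refine ⟨fun _ => 0, by simp, fun a b => ?_⟩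
      simp [Nat.one_mul]
    | succ n ih =>
      obtain ⟨m, hsum, hpair⟩ := ih
      obtain ⟨J, -, hJ⟩ := Finset.exists_min_image Finset.univ
        (fun a => ((m a : ℚ) + 1) / s a) ⟨Classical.arbitrary S, Finset.mem_univ _⟩
      have hJ' : ∀ b, (m J + 1) * s b ≤ (m b + 1) * s J := by
        intro b
        have h1 : ((m J : ℚ) + 1) / s J ≤ ((m b : ℚ) + 1) / s b := hJ b (Finset.mem_univ b)
        have hsJ : (0 : ℚ) < s J := by exact_mod_cast hs J
        have hsb : (0 : ℚ) < s b := by exact_mod_cast hs b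
        have := (div_le_div_iff₀ hsJ hsb).mp h1
        have h2 : ((m J : ℚ) + 1) * s b ≤ ((m b : ℚ) + 1) * s J := this
        exact_mod_cast h2
      refine ⟨fun a => if a = J then m a + 1 else m a, ?_, ?_⟩
      · have heq : ∀ a, (if a = J then m a + 1 else m a) = m a + (if a = J then 1 else 0) := by
          intro a; split <;> simp
        simp only [heq, Finset.sum_add_distrib, hsum, Finset.sum_ite_eq', Finset.mem_univ,
          if_true]
      · intro a b
        by_cases ha : a = J <;> by_cases hb : b = J
        · rw [ha, hb]
          simp
          nlinarith [hpair J J, hs J]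
        · rw [ha]
          simp only [if_neg hb, eq_self_iff_true, if_true]
          nlinarith [hpair J b, hs b]
        · rw [hb]
          simp only [if_neg ha, eq_self_iff_true, if_true]
          simpa [mul_comm] using hJ' a
        · simp only [if_neg ha, if_neg hb]
          exact hpair a b
  obtain ⟨m, hsum, hpair⟩ := key l
  set q := l / nS with hq
  have hqnS : q * nS ≤ l := Nat.div_mul_le_self l nS
  have hlt : l < (q + 1) * nS := by
    have h1 : nS * q + l % nS = l := Nat.div_add_mod l nS
    have h2 : l % nS < nS := Nat.mod_lt l hnSpos
    have h3 : (q + 1) * nS = nS * q + nS := by ring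
    omega
  refine ⟨m, hsum, fun a => ⟨?_, ?_⟩, hpair⟩
  · -- lower bound
    by_contra hcon
    push_neg at hcon
    have hub : ∀ b, m b ≤ q * s b := by
      intro b
      have h1 : s a * m b ≤ (m a + 1) * s b := hpair a b
      have h2 : (m a + 1) * s b ≤ q * s a * s b := by
        have : m a + 1 ≤ q * s a := hcon
        exact Nat.mul_le_mul_right _ this
      have h3 : s a * m b ≤ s a * (q * s b) := by
        calc s a * m b ≤ q * s a * s b := le_trans h1 h2
        _ = s a * (q * s b) := by ring
      exact Nat.le_of_mul_le_mul_left h3 (hs a)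
    have hstrict : ∑ b, m b < ∑ b, q * s b := by
      apply Finset.sum_lt_sum (fun b _ => hub b) ⟨a, Finset.mem_univ a, ?_⟩
      omega
    rw [hsum, ← Finset.mul_sum, ← hnS] at hstrict
    omega
  · -- upper bound
    by_contra hcon
    push_neg at hcon
    have hlb : ∀ b, (q + 1) * s b ≤ m b := by
      intro b
      have h1 : s b * m a ≤ (m b + 1) * s a := hpair b a
      have h2 : s b * ((q + 1) * s a + 1) ≤ s b * m a := Nat.mul_le_mul_left _ hcon
      have h3 : (q + 1) * s b * s a < (m b + 1) * s a := by nlinarith [hs b]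
      have h4 : (q + 1) * s b < m b + 1 := Nat.lt_of_mul_lt_mul_right h3
      omega
    have hstrict : ∑ b, (q + 1) * s b < ∑ b, m b := by
      apply Finset.sum_lt_sum (fun b _ => hlb b) ⟨a, Finset.mem_univ a, ?_⟩
      omega
    rw [hsum, ← Finset.mul_sum, ← hnS] at hstrict
    omega
end
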